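/- Let (M_m)_m be a POVM on ℂ², let √M_m denote the positive semidefinite square root of M_m, and let |±x⟩ denote the eigenvectors of σ_x. Define the Lüders (uncorrected) disturbance D_I(M, σ_x) as the conditional Shannon entropy H(𝕏|𝕏') of the joint distribution p(b, b') = (1/2)·Σ_m |⟨b'x|√M_m|bx⟩|² for b, b' ∈ {+,−}. Then g(N(M, σ_z))² + g(D_I(M, σ_x))² ≤ 1. -/

import Mathlib

open Matrix
open scoped ComplexOrder

noncomputable section

/-- The binary-entropy-type function `h(x) = -((1+x)/2)·log₂((1+x)/2) - ((1-x)/2)·log₂((1-x)/2)`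
(with the convention `0·log₂ 0 = 0`, automatic since `Real.logb 2 0 = 0`). -/
def hFun (x : ℝ) : ℝ :=
  -(((1 + x) / 2) * Real.logb 2 ((1 + x) / 2)) - ((1 - x) / 2) * Real.logb 2 ((1 - x) / 2)

/-- `g : [0,1] → [0,1]` is the inverse of `h` on `[0,1]`. -/
def gFun : ℝ → ℝ := Function.invFunOn hFun (Set.Icc 0 1)

/-- The (real) quadratic form `⟨v|M|v⟩`. -/
def qform {d : ℕ} (M : Matrix (Fin d) (Fin d) ℂ) (v : Fin d → ℂ) : ℝ :=
  (star v ⬝ᵥ M.mulVec v).re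

/-- `v` is an orthonormal basis (family) of `ℂ^d`. -/
def IsONB {d : ℕ} (v : Fin d → Fin d → ℂ) : Prop :=
  ∀ i j, star (v i) ⬝ᵥ v j = if i = j then 1 else 0

/-- A POVM: a finite family of positive semidefinite matrices summing to the identity. -/
def IsPOVM {d : ℕ} {ι : Type*} [Fintype ι] (M : ι → Matrix (Fin d) (Fin d) ℂ) : Prop :=
  (∀ m, (M m).PosSemidef) ∧ ∑ m, M m = 1

/-- A density matrix: positive semidefinite with trace 1. -/
def IsDensity {d : ℕ} (ρ : Matrix (Fin d) (Fin d) ℂ) : Prop :=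
  ρ.PosSemidef ∧ ρ.trace = 1

/-- The noise `N(M,A) = -Σ_{m,a} p(m,a)·log₂(p(m,a)/p(m))` with `p(m,a) = (1/d)·⟨a|M_m|a⟩`
and `p(m) = (1/d)·Tr[M_m]`, for an observable `A` with orthonormal eigenbasis `v`. -/
def noise {d : ℕ} {ι : Type*} [Fintype ι] (M : ι → Matrix (Fin d) (Fin d) ℂ)
    (v : Fin d → Fin d → ℂ) : ℝ :=
  -∑ m, ∑ a, ((1 / (d : ℝ)) * qform (M m) (v a)) *
      Real.logb 2 (((1 / (d : ℝ)) * qform (M m) (v a)) / ((1 / (d : ℝ)) * (M m).trace.re))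

/-- `H(A|ρ) = -Σ_a ⟨a|ρ|a⟩·log₂⟨a|ρ|a⟩` for an observable with orthonormal eigenbasis `v`. -/
def Hobs {d : ℕ} (v : Fin d → Fin d → ℂ) (ρ : Matrix (Fin d) (Fin d) ℂ) : ℝ :=
  -∑ a, qform ρ (v a) * Real.logb 2 (qform ρ (v a))

/-- Conditional Shannon entropy `H(X|Y) = -Σ_{x,y} p(x,y)·log₂(p(x,y)/p(y))` of a finite joint
distribution, conditioning on the second variable. -/
def condEnt {X Y : Type*} [Fintype X] [Fintype Y] (p : X → Y → ℝ) : ℝ :=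
  -∑ x, ∑ y, p x y * Real.logb 2 (p x y / ∑ x', p x' y)

/-- Pauli matrix σ_x. -/
def σx : Matrix (Fin 2) (Fin 2) ℂ := !![0, 1; 1, 0]
/-- Pauli matrix σ_y. -/
def σy : Matrix (Fin 2) (Fin 2) ℂ := !![0, -Complex.I; Complex.I, 0]
/-- Pauli matrix σ_z. -/
def σz : Matrix (Fin 2) (Fin 2) ℂ := !![1, 0; 0, -1]

/-- `v·σ = v₁σ_x + v₂σ_y + v₃σ_z` for `v ∈ ℝ³`. -/
def vecσ (v : Fin 3 → ℝ) : Matrix (Fin 2) (Fin 2) ℂ :=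
  (v 0 : ℂ) • σx + (v 1 : ℂ) • σy + (v 2 : ℂ) • σz

/-- The canonical orthonormal eigenbasis of σ_z. -/
def basisZ : Fin 2 → Fin 2 → ℂ := fun i j => if i = j then 1 else 0

/-- The canonical orthonormal eigenbasis `|±x⟩` of σ_x. -/
def basisX : Fin 2 → Fin 2 → ℂ := fun i =>
  ![((1 / Real.sqrt 2 : ℝ) : ℂ),
    if i = 0 then ((1 / Real.sqrt 2 : ℝ) : ℂ) else (-(1 / Real.sqrt 2 : ℝ) : ℂ)]

/-- The positive semidefinite square root of a positive semidefinite matrix (the definition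
`Matrix.PosSemidef.sqrt` of the older Mathlib, removed since). -/
def Matrix.PosSemidef.sqrt {n : Type*} [Fintype n] [DecidableEq n] {A : Matrix n n ℂ}
    (hA : A.PosSemidef) : Matrix n n ℂ :=
  hA.1.eigenvectorUnitary.1 * diagonal ((↑) ∘ (√·) ∘ hA.1.eigenvalues) *
    (star hA.1.eigenvectorUnitary : Matrix n n ℂ)

/-- Eigenvalues `+1, -1` of a (nondegenerate) Pauli observable. -/
def pmEig : Fin 2 → ℂ := fun i => if i = 0 then 1 else -1

end

/-!
Write `S_m = √M_m`. Since the `S_m` are Hermitian with `∑ S_m² = 1`, the Lüders joint distribution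
on the `σ_x` basis is symmetric with uniform marginals, so `D_I = h(1 - 2ε)` with
`ε = ∑_m |⟨-x|S_m|+x⟩|²`, i.e. `g(D_I) = 1 - 2ε`. The noise splits over outcomes as
`N = ∑_m w_m h(t_m)` with `w_m = Tr M_m / 2` and `t_m = (⟨0|M_m|0⟩ - ⟨1|M_m|1⟩) / Tr M_m`.
In coordinates `S_m = [[a, c], [c̄, d]]` one checks `t_m² + δ_m² ≤ 1` for
`δ_m = 1 - 4|⟨-x|S_m|+x⟩|² / Tr M_m`, and `δ_m ≥ 0` because `det S_m ≥ 0`; moreover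
`∑ w_m δ_m = 1 - 2ε`. As `h` decreases on `[0, 1]` and `δ ↦ h(√(1 - δ²))` is convex there,
Jensen's inequality gives `N ≥ h(√(1 - g(D_I)²))`, that is `g(N)² ≤ 1 - g(D_I)²`.
-/
noncomputable section

open Real Set

lemma hFun_eq_binEntropy (x : ℝ) : hFun x = binEntropy ((1 + x) / 2) / log 2 := by
  rw [hFun, binEntropy, log_inv, log_inv, show 1 - (1 + x) / 2 = (1 - x) / 2 by ring]
  simp only [logb]
  ring

lemma continuous_hFun : Continuous hFun := by
  simp only [funext hFun_eq_binEntropy]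
  fun_prop

lemma hFun_le_one (x : ℝ) : hFun x ≤ 1 := by
  rw [hFun_eq_binEntropy, div_le_one (log_pos one_lt_two)]
  exact binEntropy_le_log_two

lemma hFun_neg (x : ℝ) : hFun (-x) = hFun x := by
  rw [hFun_eq_binEntropy, hFun_eq_binEntropy, ← binEntropy_one_sub]
  congr 2
  ring

lemma hFun_abs (x : ℝ) : hFun |x| = hFun x := by
  rcases abs_choice x with h | h <;> rw [h]
  exact hFun_neg x

lemma hFun_zero : hFun 0 = 1 := by
  simp [hFun_eq_binEntropy, (log_pos one_lt_two).ne']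

lemma hFun_one : hFun 1 = 0 := by
  simp [hFun_eq_binEntropy]

lemma strictAntiOn_hFun : StrictAntiOn hFun (Icc 0 1) := by
  intro x hx y hy hxy
  simp only [hFun_eq_binEntropy]
  refine div_lt_div_of_pos_right (binEntropy_strictAntiOn ?_ ?_ (by linarith)) (log_pos one_lt_two)
  · exact ⟨by linarith [hx.1], by linarith [hx.2]⟩
  · exact ⟨by linarith [hy.1], by linarith [hy.2]⟩

lemma hFun_nonneg {x : ℝ} (hx : x ∈ Icc (0 : ℝ) 1) : 0 ≤ hFun x :=
  hFun_one ▸ strictAntiOn_hFun.antitoneOn hx ⟨zero_le_one, le_rfl⟩ hx.2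

lemma surjOn_hFun : SurjOn hFun (Icc 0 1) (Icc 0 1) := by
  have h := intermediate_value_Icc' zero_le_one continuous_hFun.continuousOn
  rwa [hFun_zero, hFun_one] at h

lemma gFun_hFun {x : ℝ} (hx : x ∈ Icc (0 : ℝ) 1) : gFun (hFun x) = x :=
  strictAntiOn_hFun.injOn.leftInvOn_invFunOn hx

lemma gFun_mem {y : ℝ} (hy : y ∈ Icc (0 : ℝ) 1) : gFun y ∈ Icc (0 : ℝ) 1 :=
  Function.invFunOn_mem (surjOn_hFun hy)

lemma hFun_gFun {y : ℝ} (hy : y ∈ Icc (0 : ℝ) 1) : hFun (gFun y) = y :=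
  Function.invFunOn_eq (surjOn_hFun hy)

lemma gFun_le_of_hFun_le {x y : ℝ} (hx : x ∈ Icc (0 : ℝ) 1) (hy : y ≤ 1) (hxy : hFun x ≤ y) :
    gFun y ≤ x := by
  have hy' : y ∈ Icc (0 : ℝ) 1 := ⟨(hFun_nonneg hx).trans hxy, hy⟩
  rw [← strictAntiOn_hFun.le_iff_ge hx (gFun_mem hy'), hFun_gFun hy']
  exact hxy

lemma hFun_sqrt_le {s t : ℝ} (hts : t ^ 2 ≤ s) (hs : s ≤ 1) : hFun √s ≤ hFun t := by
  have hs1 : √s ≤ 1 := sqrt_le_one.mpr hs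
  rw [← hFun_abs t, ← sqrt_sq_eq_abs]
  exact strictAntiOn_hFun.antitoneOn ⟨sqrt_nonneg _, (sqrt_le_sqrt hts).trans hs1⟩
    ⟨sqrt_nonneg _, hs1⟩ (sqrt_le_sqrt hts)

lemma two_mul_le_log_sub_log {s : ℝ} (h0 : 0 ≤ s) (h1 : s < 1) :
    2 * s ≤ log (1 + s) - log (1 - s) := by
  have hs := hasSum_log_sub_log_of_abs_lt_one (abs_lt.mpr ⟨by linarith, h1⟩)
  simpa using le_hasSum hs 0 fun k _ => by positivity

lemma hasDerivAt_hFun {x : ℝ} (h1 : -1 < x) (h2 : x < 1) :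
    HasDerivAt hFun ((log (1 - x) - log (1 + x)) / (2 * log 2)) x := by
  have hp := hasDerivAt_binEntropy (p := (1 + x) / 2) (by linarith) (by linarith)
  have hin : HasDerivAt (fun x : ℝ => (1 + x) / 2) (1 / 2) x := by
    simpa using ((hasDerivAt_id x).const_add 1).div_const 2
  rw [show hFun = fun x => binEntropy ((1 + x) / 2) / log 2 from funext hFun_eq_binEntropy]
  refine ((hp.comp x hin).div_const (log 2)).congr_deriv ?_
  rw [show 1 - (1 + x) / 2 = (1 - x) / 2 by ring, log_div (by linarith) two_ne_zero,
    log_div (by linarith) two_ne_zero]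
  ring

def tradeoffFun (δ : ℝ) : ℝ := hFun √(1 - δ ^ 2)

def tradeoffDeriv (δ : ℝ) : ℝ :=
  δ * (log (1 + √(1 - δ ^ 2)) - log (1 - √(1 - δ ^ 2))) / (2 * √(1 - δ ^ 2) * log 2)

lemma sqrt_one_sub_sq_mem {δ : ℝ} (hδ : δ ∈ Ioo (0 : ℝ) 1) :
    √(1 - δ ^ 2) ∈ Ioo (0 : ℝ) 1 ∧ √(1 - δ ^ 2) ^ 2 = 1 - δ ^ 2 := by
  obtain ⟨h0, h1⟩ := hδ
  refine ⟨⟨sqrt_pos.mpr (by nlinarith), (sqrt_lt' one_pos).mpr (by nlinarith)⟩, sq_sqrt (by nlinarith)⟩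

lemma hasDerivAt_sqrt_one_sub_sq {δ : ℝ} (hδ : δ ∈ Ioo (0 : ℝ) 1) :
    HasDerivAt (fun δ : ℝ => √(1 - δ ^ 2)) (-δ / √(1 - δ ^ 2)) δ := by
  obtain ⟨⟨hs0, -⟩, -⟩ := sqrt_one_sub_sq_mem hδ
  have h := ((hasDerivAt_pow 2 δ).const_sub 1).sqrt (sqrt_pos.mp hs0).ne'
  convert h using 1
  field_simp
  ring

lemma hasDerivAt_tradeoffFun {δ : ℝ} (hδ : δ ∈ Ioo (0 : ℝ) 1) :
    HasDerivAt tradeoffFun (tradeoffDeriv δ) δ := by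
  obtain ⟨⟨hs0, hs1⟩, -⟩ := sqrt_one_sub_sq_mem hδ
  have h := (hasDerivAt_hFun (by linarith) hs1).comp δ (hasDerivAt_sqrt_one_sub_sq hδ)
  refine h.congr_deriv ?_
  rw [tradeoffDeriv]
  field_simp
  ring

lemma hasDerivAt_tradeoffDeriv {δ : ℝ} (hδ : δ ∈ Ioo (0 : ℝ) 1) :
    HasDerivAt tradeoffDeriv
      ((log (1 + √(1 - δ ^ 2)) - log (1 - √(1 - δ ^ 2)) - 2 * √(1 - δ ^ 2)) /
        (2 * √(1 - δ ^ 2) ^ 3 * log 2)) δ := by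
  obtain ⟨⟨hs0, hs1⟩, hsq⟩ := sqrt_one_sub_sq_mem hδ
  have ds := hasDerivAt_sqrt_one_sub_sq hδ
  have dl1 := (ds.const_add 1).log (by linarith)
  have dl2 := (ds.const_sub 1).log (by linarith)
  have h := ((hasDerivAt_id' δ).mul (dl1.sub dl2)).div
    ((ds.const_mul 2).mul_const (log 2)) (by positivity)
  refine h.congr_deriv ?_
  simp only [Pi.mul_apply, Pi.sub_apply]
  set s := √(1 - δ ^ 2)
  have hlog2 := log_pos one_lt_two
  have hs1' : 1 - s ≠ 0 := by linarith
  field_simp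
  linear_combination ((1 - s ^ 2) * (log (1 + s) - log (1 - s)) - 2 * s) * hsq

lemma convexOn_tradeoffFun : ConvexOn ℝ (Icc 0 1) tradeoffFun := by
  refine convexOn_of_hasDerivWithinAt2_nonneg (f' := tradeoffDeriv)
    (f'' := fun δ => (log (1 + √(1 - δ ^ 2)) - log (1 - √(1 - δ ^ 2)) - 2 * √(1 - δ ^ 2)) /
        (2 * √(1 - δ ^ 2) ^ 3 * log 2)) (convex_Icc 0 1)
    (continuous_hFun.comp (by fun_prop)).continuousOn
    (fun δ hδ => ?_) (fun δ hδ => ?_) (fun δ hδ => ?_) <;> rw [interior_Icc] at *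
  · exact (hasDerivAt_tradeoffFun hδ).hasDerivWithinAt
  · exact (hasDerivAt_tradeoffDeriv hδ).hasDerivWithinAt
  · obtain ⟨⟨hs0, hs1⟩, -⟩ := sqrt_one_sub_sq_mem hδ
    have hlog := two_mul_le_log_sub_log hs0.le hs1
    have hlog2 := log_pos one_lt_two
    exact div_nonneg (by linarith) (by positivity)

lemma tradeoffFun_sum_le {ι : Type*} {s : Finset ι} {w δ t : ι → ℝ} (hw : ∀ i ∈ s, 0 ≤ w i)
    (hw1 : ∑ i ∈ s, w i = 1) (hδ : ∀ i ∈ s, δ i ∈ Icc (0 : ℝ) 1)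
    (ht : ∀ i ∈ s, t i ^ 2 + δ i ^ 2 ≤ 1) :
    tradeoffFun (∑ i ∈ s, w i * δ i) ≤ ∑ i ∈ s, w i * hFun (t i) := by
  refine (convexOn_tradeoffFun.map_sum_le hw hw1 hδ).trans (Finset.sum_le_sum fun i hi => ?_)
  refine mul_le_mul_of_nonneg_left (hFun_sqrt_le ?_ ?_) (hw i hi)
  · linarith [ht i hi]
  · linarith [sq_nonneg (δ i)]

lemma tradeoffFun_le_sum {ι : Type*} {s : Finset ι} {P E r : ι → ℝ} (hE : ∀ i ∈ s, 0 ≤ E i)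
    (hEP : ∀ i ∈ s, 4 * E i ≤ P i) (hr : ∀ i ∈ s, r i ^ 2 + (P i - 4 * E i) ^ 2 ≤ P i ^ 2)
    (hP : ∑ i ∈ s, P i = 2) :
    tradeoffFun (1 - 2 * ∑ i ∈ s, E i) ≤ ∑ i ∈ s, P i / 2 * hFun (r i / P i) := by
  -- outcomes with `P i = 0` carry no weight, whatever the junk values of `· / P i`
  have hzero : ∀ i ∈ s, P i = 0 → E i = 0 ∧ r i = 0 := fun i hi h0 => by
    constructor <;> nlinarith [hE i hi, hEP i hi, hr i hi]
  have hmean : 1 - 2 * ∑ i ∈ s, E i = ∑ i ∈ s, P i / 2 * ((P i - 4 * E i) / P i) := by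
    calc 1 - 2 * ∑ i ∈ s, E i = ∑ i ∈ s, (P i - 4 * E i) / 2 := by
          rw [← Finset.sum_div, Finset.sum_sub_distrib, hP, ← Finset.mul_sum]; ring
      _ = _ := Finset.sum_congr rfl fun i hi => by
          by_cases h : P i = 0
          · simp [h, (hzero i hi h).1]
          · field_simp
  rw [hmean]
  refine tradeoffFun_sum_le (fun i hi => by linarith [hE i hi, hEP i hi]) ?_
    (fun i hi => ?_) (fun i hi => ?_)
  · rw [← Finset.sum_div, hP]; norm_num
  · rcases eq_or_ne (P i) 0 with h | h
    · simp [h]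
    have hP0 : 0 < P i := lt_of_le_of_ne (by linarith [hE i hi, hEP i hi]) (Ne.symm h)
    exact ⟨div_nonneg (by linarith [hEP i hi]) hP0.le,
      (div_le_one hP0).mpr (by linarith [hE i hi])⟩
  · rcases eq_or_ne (P i) 0 with h | h
    · simp [h]
    rw [div_pow, div_pow, ← add_div, div_le_one (by positivity)]
    exact hr i hi

lemma sq_gFun_add_sq_gFun_hFun_le {δ y : ℝ} (hδ : δ ∈ Icc (0 : ℝ) 1) (hy : tradeoffFun δ ≤ y)
    (hy1 : y ≤ 1) : gFun y ^ 2 + gFun (hFun δ) ^ 2 ≤ 1 := by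
  have hs : √(1 - δ ^ 2) ∈ Icc (0 : ℝ) 1 :=
    ⟨sqrt_nonneg _, sqrt_le_one.mpr (by linarith [sq_nonneg δ])⟩
  have hy0 : 0 ≤ y := (hFun_nonneg hs).trans hy
  have hg := gFun_le_of_hFun_le hs hy1 hy
  have hg0 := (gFun_mem ⟨hy0, hy1⟩).1
  rw [gFun_hFun hδ]
  nlinarith [sq_sqrt (show 0 ≤ 1 - δ ^ 2 by nlinarith [hδ.1, hδ.2]),
    mul_le_mul hg hg hg0 (sqrt_nonneg _)]

lemma Matrix.PosSemidef.posSemidef_sqrt {n : Type*} [Fintype n] [DecidableEq n]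
    {A : Matrix n n ℂ} (hA : A.PosSemidef) : hA.sqrt.PosSemidef := by
  rw [Matrix.PosSemidef.sqrt, star_eq_conjTranspose]
  refine (PosSemidef.diagonal fun i => ?_).mul_mul_conjTranspose_same _
  simp only [Function.comp_apply, Pi.zero_apply]
  exact_mod_cast sqrt_nonneg _

lemma Matrix.PosSemidef.sqrt_mul_self {n : Type*} [Fintype n] [DecidableEq n]
    {A : Matrix n n ℂ} (hA : A.PosSemidef) : hA.sqrt * hA.sqrt = A := by
  set U := hA.1.eigenvectorUnitary
  set D : Matrix n n ℂ := diagonal ((↑) ∘ (√·) ∘ hA.1.eigenvalues)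
  have hU : (star U : Matrix n n ℂ) * U = 1 := Unitary.coe_star_mul_self U
  have hD : D * D = diagonal (RCLike.ofReal ∘ hA.1.eigenvalues) := by
    rw [diagonal_mul_diagonal]
    congr 1
    funext i
    simp [← Complex.ofReal_mul, mul_self_sqrt (hA.eigenvalues_nonneg i)]
  calc hA.sqrt * hA.sqrt = U * (D * ((star U : Matrix n n ℂ) * U) * D) * star U := by
        simp only [Matrix.PosSemidef.sqrt, Matrix.mul_assoc]; rfl
    _ = A := by rw [hU, Matrix.mul_one, hD]; exact hA.1.spectral_theorem.symm

lemma qform_sum {ι : Type*} [Fintype ι] {d : ℕ} (M : ι → Matrix (Fin d) (Fin d) ℂ)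
    (v : Fin d → ℂ) : qform (∑ m, M m) v = ∑ m, qform (M m) v := by
  simp [qform, sum_mulVec, dotProduct_sum, Complex.re_sum]

lemma IsONB.qform_one {d : ℕ} {v : Fin d → Fin d → ℂ} (hv : IsONB v) (i : Fin d) :
    qform 1 (v i) = 1 := by
  simp [qform, hv i i]

lemma IsONB.sum_norm_sq_dotProduct {d : ℕ} {v : Fin d → Fin d → ℂ} (hv : IsONB v)
    (w : Fin d → ℂ) : ∑ i, ‖star (v i) ⬝ᵥ w‖ ^ 2 = (star w ⬝ᵥ w).re := by
  set U : Matrix (Fin d) (Fin d) ℂ := of fun i j => star (v i j)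
  have hUU : U * Uᴴ = 1 := by
    ext i k
    simpa [U, mul_apply, one_apply, dotProduct] using hv i k
  have hUw : U *ᵥ w = fun i => star (v i) ⬝ᵥ w := rfl
  calc ∑ i, ‖star (v i) ⬝ᵥ w‖ ^ 2 = (star (U *ᵥ w) ⬝ᵥ U *ᵥ w).re := by
        simp only [hUw, dotProduct, Pi.star_apply, Complex.star_def, Complex.conj_mul',
          Complex.re_sum]
        norm_cast
    _ = (star w ⬝ᵥ (Uᴴ * U) *ᵥ w).re := by
        rw [star_mulVec, ← dotProduct_mulVec, mulVec_mulVec]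
    _ = (star w ⬝ᵥ w).re := by rw [mul_eq_one_comm.mp hUU, one_mulVec]

lemma Matrix.IsHermitian.norm_dotProduct_mulVec_comm {d : ℕ} {S : Matrix (Fin d) (Fin d) ℂ}
    (hS : S.IsHermitian) (v w : Fin d → ℂ) : ‖star v ⬝ᵥ S *ᵥ w‖ = ‖star w ⬝ᵥ S *ᵥ v‖ := by
  rw [star_dotProduct, star_mulVec, hS.eq, ← dotProduct_mulVec, norm_star]

lemma Matrix.IsHermitian.qform_mul_self {d : ℕ} {S : Matrix (Fin d) (Fin d) ℂ}
    (hS : S.IsHermitian) (w : Fin d → ℂ) : qform (S * S) w = (star (S *ᵥ w) ⬝ᵥ S *ᵥ w).re := by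
  rw [qform, star_mulVec, hS.eq, ← dotProduct_mulVec, mulVec_mulVec]

lemma inv_sqrt_two_mul_self : ((√2 : ℝ) : ℂ)⁻¹ * ((√2 : ℝ) : ℂ)⁻¹ = 2⁻¹ := by
  rw [← mul_inv, ← Complex.ofReal_mul, mul_self_sqrt zero_le_two]
  norm_num

lemma isONB_basisX : IsONB basisX := by
  intro i j
  fin_cases i <;> fin_cases j <;>
    norm_num [basisX, dotProduct, Fin.sum_univ_two, inv_sqrt_two_mul_self]

lemma condEnt_fin_two_of_symm {p : Fin 2 → Fin 2 → ℝ} (hsymm : p 1 0 = p 0 1)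
    (hrow : ∀ b, ∑ b', p b b' = 1 / 2) : condEnt p = hFun (1 - 4 * p 0 1) := by
  have h₀ : p 0 0 = 1 / 2 - p 0 1 := by linarith [hrow 0, Fin.sum_univ_two (p 0)]
  have h₁ : p 1 1 = 1 / 2 - p 0 1 := by linarith [hrow 1, Fin.sum_univ_two (p 1), hsymm]
  simp only [condEnt, hFun, Fin.sum_univ_two, h₀, h₁, hsymm, sub_add_cancel, add_sub_cancel]
  rw [show (1 + (1 - 4 * p 0 1)) / 2 = (1 / 2 - p 0 1) / (1 / 2) by ring,
    show (1 - (1 - 4 * p 0 1)) / 2 = p 0 1 / (1 / 2) by ring]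
  ring

lemma star_basisX_one_dotProduct_mulVec (S : Matrix (Fin 2) (Fin 2) ℂ) :
    star (basisX 1) ⬝ᵥ S *ᵥ basisX 0 = (S 0 0 + S 0 1 - S 1 0 - S 1 1) / 2 := by
  simp only [dotProduct, basisX, one_div, Complex.ofReal_inv, Fin.isValue, one_ne_zero, ↓reduceIte,
    Pi.star_apply, RCLike.star_def, mulVec, Fin.sum_univ_two, cons_val_zero, cons_val_one,
    cons_val_fin_one, map_inv₀, Complex.conj_ofReal, map_neg, neg_mul]
  linear_combination (S 0 0 + S 0 1 - S 1 0 - S 1 1) * inv_sqrt_two_mul_self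

def flipWeight (S : Matrix (Fin 2) (Fin 2) ℂ) : ℝ := ‖star (basisX 1) ⬝ᵥ S *ᵥ basisX 0‖ ^ 2

lemma condEnt_lueders_eq {ι : Type*} [Fintype ι] {S : ι → Matrix (Fin 2) (Fin 2) ℂ}
    (hS : ∀ m, (S m).IsHermitian) (hSS : ∑ m, S m * S m = 1) :
    condEnt (fun b b' : Fin 2 => (1 / 2 : ℝ) * ∑ m, ‖star (basisX b') ⬝ᵥ (S m) *ᵥ basisX b‖ ^ 2) =
      hFun (1 - 2 * ∑ m, flipWeight (S m)) := by
  rw [condEnt_fin_two_of_symm]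
  · congr 1
    simp only [flipWeight]
    ring
  · simp only [(hS _).norm_dotProduct_mulVec_comm (basisX 0)]
  · intro b
    rw [← Finset.mul_sum, Finset.sum_comm]
    simp only [isONB_basisX.sum_norm_sq_dotProduct, ← (hS _).qform_mul_self]
    rw [← qform_sum, hSS, isONB_basisX.qform_one]
    norm_num

lemma Matrix.IsHermitian.exists_eq_fin_two {S : Matrix (Fin 2) (Fin 2) ℂ} (hS : S.IsHermitian) :
    ∃ (a d : ℝ) (c : ℂ), S = !![(a : ℂ), c; star c, (d : ℂ)] := by
  refine ⟨(S 0 0).re, (S 1 1).re, S 0 1, ?_⟩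
  ext i j
  fin_cases i <;> fin_cases j
  · exact (hS.coe_re_apply_self 0).symm
  · rfl
  · exact (hS.apply 1 0).symm
  · exact (hS.coe_re_apply_self 1).symm

section HermitianFinTwo

variable (a d : ℝ) (c : ℂ)

lemma re_mul_self_fin_two_zero :
    ((!![(a : ℂ), c; star c, (d : ℂ)] * !![(a : ℂ), c; star c, (d : ℂ)]) 0 0).re =
      a ^ 2 + Complex.normSq c := by
  rw [mul_fin_two]
  simp [sq, Complex.normSq_apply]

lemma re_mul_self_fin_two_one :
    ((!![(a : ℂ), c; star c, (d : ℂ)] * !![(a : ℂ), c; star c, (d : ℂ)]) 1 1).re =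
      d ^ 2 + Complex.normSq c := by
  rw [mul_fin_two]
  simp [sq, Complex.normSq_apply, add_comm]

lemma flipWeight_fin_two :
    flipWeight !![(a : ℂ), c; star c, (d : ℂ)] = ((a - d) ^ 2 + 4 * c.im ^ 2) / 4 := by
  have hc : c - star c = 2 * c.im * Complex.I := by
    rw [Complex.star_def, Complex.sub_conj]; push_cast; ring
  have h : ((a : ℂ) + c - star c - d) / 2 = ((a - d) / 2 : ℝ) + (c.im : ℂ) * Complex.I := by
    push_cast; linear_combination hc / 2
  rw [flipWeight, star_basisX_one_dotProduct_mulVec]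
  change ‖((a : ℂ) + c - star c - d) / 2‖ ^ 2 = _
  rw [h, ← Complex.normSq_eq_norm_sq, Complex.normSq_add_mul_I]
  ring

end HermitianFinTwo

lemma Matrix.IsHermitian.sq_sub_add_sq_sub_flipWeight_le {S : Matrix (Fin 2) (Fin 2) ℂ}
    (hS : S.IsHermitian) :
    (((S * S) 0 0).re - ((S * S) 1 1).re) ^ 2 +
        (((S * S) 0 0).re + ((S * S) 1 1).re - 4 * flipWeight S) ^ 2 ≤
      (((S * S) 0 0).re + ((S * S) 1 1).re) ^ 2 := by
  obtain ⟨a, d, c, rfl⟩ := hS.exists_eq_fin_two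
  rw [re_mul_self_fin_two_zero, re_mul_self_fin_two_one, flipWeight_fin_two,
    Complex.normSq_apply]
  nlinarith [sq_nonneg ((a - d) * c.re), sq_nonneg ((a + d) * c.im), sq_nonneg (c.re * c.im)]

lemma Matrix.PosSemidef.four_mul_flipWeight_le {S : Matrix (Fin 2) (Fin 2) ℂ}
    (hS : S.PosSemidef) : 4 * flipWeight S ≤ ((S * S) 0 0).re + ((S * S) 1 1).re := by
  have hdet := hS.det_nonneg
  obtain ⟨a, d, c, rfl⟩ := hS.1.exists_eq_fin_two
  rw [re_mul_self_fin_two_zero, re_mul_self_fin_two_one, flipWeight_fin_two,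
    Complex.normSq_apply]
  rw [det_fin_two_of, ← Complex.ofReal_mul, mul_comm c, Complex.star_def, Complex.conj_mul',
    ← Complex.ofReal_pow, ← Complex.ofReal_sub, Complex.zero_le_real, Complex.sq_norm,
    Complex.normSq_apply] at hdet
  nlinarith [sq_nonneg c.re]

lemma half_mul_hFun_div_eq (q₀ q₁ : ℝ) :
    (q₀ + q₁) / 2 * hFun ((q₀ - q₁) / (q₀ + q₁)) =
      -(1 / 2 * q₀ * logb 2 (1 / 2 * q₀ / (1 / 2 * (q₀ + q₁))) +
        1 / 2 * q₁ * logb 2 (1 / 2 * q₁ / (1 / 2 * (q₀ + q₁)))) := by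
  rcases eq_or_ne (q₀ + q₁) 0 with h | h
  · simp [h]
  have h₀ : (1 + (q₀ - q₁) / (q₀ + q₁)) / 2 = q₀ / (q₀ + q₁) := by field_simp; ring
  have h₁ : (1 - (q₀ - q₁) / (q₀ + q₁)) / 2 = q₁ / (q₀ + q₁) := by field_simp; ring
  simp only [hFun, h₀, h₁]
  field_simp
  ring

lemma qform_basisZ (M : Matrix (Fin 2) (Fin 2) ℂ) (a : Fin 2) :
    qform M (basisZ a) = (M a a).re := by
  fin_cases a <;> simp [qform, basisZ, mulVec, dotProduct]

lemma noise_basisZ_eq {ι : Type*} [Fintype ι] (M : ι → Matrix (Fin 2) (Fin 2) ℂ) :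
    noise M basisZ = ∑ m, ((M m 0 0).re + (M m 1 1).re) / 2 *
      hFun (((M m 0 0).re - (M m 1 1).re) / ((M m 0 0).re + (M m 1 1).re)) := by
  simp only [noise, half_mul_hFun_div_eq, qform_basisZ, Fin.sum_univ_two, trace_fin_two,
    Complex.add_re, Finset.sum_neg_distrib, Nat.cast_ofNat]

lemma IsPOVM.sum_re_apply_self {ι : Type*} [Fintype ι] {d : ℕ}
    {M : ι → Matrix (Fin d) (Fin d) ℂ} (hM : IsPOVM M) (i : Fin d) : ∑ m, (M m i i).re = 1 := by
  simpa [Matrix.sum_apply, Complex.re_sum] using congrArg (fun A => (A i i).re) hM.2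

end

/-- For every POVM `M` on `ℂ²`, with the Lüders (uncorrected) disturbance `D_I(M,σ_x)` defined
as `H(𝕏|𝕏')` of `p(b,b') = (1/2)·Σ_m |⟨b'x|√M_m|bx⟩|²`, one has
`g(N(M,σ_z))² + g(D_I(M,σ_x))² ≤ 1`. -/
theorem stmt_16 {ι : Type*} [Fintype ι] (M : ι → Matrix (Fin 2) (Fin 2) ℂ)
    (hM : IsPOVM M) :
    gFun (noise M basisZ) ^ 2 +
      gFun (condEnt (fun b b' : Fin 2 =>
        (1 / 2 : ℝ) * ∑ m, ‖star (basisX b') ⬝ᵥ ((hM.1 m).sqrt.mulVec (basisX b))‖ ^ 2)) ^ 2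
      ≤ 1 := by
  set S := fun m => (hM.1 m).sqrt
  have hS : ∀ m, (S m).PosSemidef := fun m => (hM.1 m).posSemidef_sqrt
  have hSS : ∀ m, S m * S m = M m := fun m => (hM.1 m).sqrt_mul_self
  set P := fun m => (M m 0 0).re + (M m 1 1).re
  have hP : ∑ m, P m = 2 := by
    rw [Finset.sum_add_distrib, hM.sum_re_apply_self, hM.sum_re_apply_self]; norm_num
  have hEP : ∀ m, 4 * flipWeight (S m) ≤ P m := fun m => by
    simpa only [hSS] using (hS m).four_mul_flipWeight_le
  have hE : ∀ m, 0 ≤ flipWeight (S m) := fun m => sq_nonneg _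
  rw [condEnt_lueders_eq (fun m => (hS m).1) (by simp only [hSS, hM.2]), noise_basisZ_eq]
  refine sq_gFun_add_sq_gFun_hFun_le ⟨?_, ?_⟩ ?_ ?_
  · have := Finset.sum_le_sum fun m (_ : m ∈ Finset.univ) => hEP m
    rw [← Finset.mul_sum, hP] at this
    linarith
  · linarith [Finset.sum_nonneg fun m (_ : m ∈ Finset.univ) => hE m]
  · exact tradeoffFun_le_sum (fun m _ => hE m) (fun m _ => hEP m)
      (fun m _ => by simpa only [hSS] using (hS m).1.sq_sub_add_sq_sub_flipWeight_le) hP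
  · calc ∑ m, P m / 2 * hFun (((M m 0 0).re - (M m 1 1).re) / P m) ≤ ∑ m, P m / 2 :=
          Finset.sum_le_sum fun m _ =>
            mul_le_of_le_one_right (by linarith [hE m, hEP m]) (hFun_le_one _)
      _ = 1 := by rw [← Finset.sum_div, hP]; norm_num
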